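/- Let F: 2^{[d]} → ℝ be submodular and s ∈ ℝ^d with coordinates sorted non-increasingly as s_{j₁} ≥ ⋯ ≥ s_{j_d}, S_k = {j₁,…,j_k}. Then the vector k with k_{j_i} = F(S_i) − F(S_{i−1}) is a subgradient of the Lovász extension f_L at s: for all y ∈ ℝ^d, f_L(y) ≥ f_L(s) + ⟨k, y − s⟩. -/

import Mathlib

/-- The set of the top-`m` indices in the order given by the permutation `σ`. -/
def lovaszPrefix {d : ℕ} (σ : Equiv.Perm (Fin d)) (m : ℕ) : Finset (Fin d) :=
  Finset.univ.filter (fun i => (σ.symm i : ℕ) < m)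

/-- The Lovász extension of a set function `F` on `2^[d]`. -/
noncomputable def lovasz {d : ℕ} (F : Finset (Fin d) → ℝ) (s : Fin d → ℝ) : ℝ :=
  let σ := Tuple.sort (fun i => -s i)
  ∑ k : Fin d, s (σ k) *
    (F (lovaszPrefix σ ((k : ℕ) + 1)) - F (lovaszPrefix σ (k : ℕ)))

/-- The greedy vector of marginal gains of `F` along the non-increasing sorted
order of `s`: its coordinate at the `i`-th largest entry of `s` is
`F(S_i) - F(S_{i-1})`. -/
noncomputable def greedyVector {d : ℕ} (F : Finset (Fin d) → ℝ) (s : Fin d → ℝ) :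
    Fin d → ℝ :=
  let σ := Tuple.sort (fun i => -s i)
  fun m => F (lovaszPrefix σ ((σ.symm m : ℕ) + 1)) - F (lovaszPrefix σ (σ.symm m : ℕ))

/-!
For an order `σ` of the coordinates with prefix sets `P_m`, the Lovász sum
`∑ₖ y(σ k) (F(P_{k+1}) - F(P_k))` equals `⟨K, y⟩`, where `K` is the greedy vector of `F` along
`σ`; along the sorted order of `s` this reads `⟨K, s⟩ = f_L(s)`. Submodularity gives
`K(A) := ∑_{i ∈ A} K_i ≤ F(A) - F(∅)` for all `A`, with equality at `A = univ`. Writing `⟨K, y⟩`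
as the Lovász sum of the modular function `A ↦ K(A)` along the sorted order of `y`, Abel
summation against the non-increasing weights turns these inequalities on prefix sets into
`⟨K, y⟩ ≤ f_L(y)`.
-/

lemma lovaszPrefix_zero {d : ℕ} (σ : Equiv.Perm (Fin d)) : lovaszPrefix σ 0 = ∅ := by
  simp [lovaszPrefix]

lemma lovaszPrefix_self {d : ℕ} (σ : Equiv.Perm (Fin d)) : lovaszPrefix σ d = Finset.univ := by
  simp [lovaszPrefix]

lemma lovaszPrefix_succ {d : ℕ} (σ : Equiv.Perm (Fin d)) (k : Fin d) :
    lovaszPrefix σ (k + 1) = insert (σ k) (lovaszPrefix σ k) := by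
  ext i
  simp [lovaszPrefix, Fin.val_inj, Equiv.symm_apply_eq, le_iff_eq_or_lt]

lemma apply_notMem_lovaszPrefix {d : ℕ} (σ : Equiv.Perm (Fin d)) (k : Fin d) :
    σ k ∉ lovaszPrefix σ k := by
  simp [lovaszPrefix]

lemma Fin.sum_sub_telescope {d : ℕ} (g : ℕ → ℝ) :
    ∑ k : Fin d, (g (k + 1) - g k) = g d - g 0 := by
  rw [Fin.sum_univ_eq_sum_range (fun m => g (m + 1) - g m), Finset.sum_range_sub]

lemma Finset.sum_range_mul_sub_nonneg {n : ℕ} {a w : ℕ → ℝ}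
    (ha : ∀ i, i + 1 < n → a (i + 1) ≤ a i) (hw : ∀ k, 0 ≤ w k) (hw0 : w 0 = 0)
    (hwn : w n = 0) :
    0 ≤ ∑ k ∈ Finset.range n, a k * (w (k + 1) - w k) := by
  have := Finset.sum_range_by_parts a (fun k => w (k + 1) - w k) n
  simp only [smul_eq_mul, Finset.sum_range_sub, hw0, hwn, sub_zero, mul_zero, zero_sub] at this
  rw [this, neg_nonneg]
  refine Finset.sum_nonpos fun i hi => mul_nonpos_of_nonpos_of_nonneg ?_ (hw _)
  exact sub_nonpos.2 (ha i (by have := Finset.mem_range.1 hi; omega))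

lemma Fin.sum_mul_sub_nonneg_of_antitone {d : ℕ} {a : Fin d → ℝ} (ha : Antitone a)
    {w : ℕ → ℝ} (hw : ∀ k, 0 ≤ w k) (hw0 : w 0 = 0) (hwd : w d = 0) :
    0 ≤ ∑ k : Fin d, a k * (w (k + 1) - w k) := by
  set a' : ℕ → ℝ := fun m => if h : m < d then a ⟨m, h⟩ else 0
  have hsum : ∑ k : Fin d, a k * (w (k + 1) - w k) =
      ∑ k ∈ Finset.range d, a' k * (w (k + 1) - w k) := by
    rw [← Fin.sum_univ_eq_sum_range (fun k => a' k * (w (k + 1) - w k))]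
    simp [a']
  rw [hsum]
  refine Finset.sum_range_mul_sub_nonneg (fun i hi => ?_) hw hw0 hwd
  simp only [a', dif_pos hi, dif_pos (Nat.lt_of_succ_lt hi)]
  exact ha (Fin.mk_le_mk.2 (Nat.le_succ i))

section Along

variable {d : ℕ} (σ : Equiv.Perm (Fin d)) (F : Finset (Fin d) → ℝ)

-- `lovasz F y` and `greedyVector F s` are these at `σ = Tuple.sort (-y)`, resp. `Tuple.sort (-s)`,
-- definitionally.
noncomputable def lovaszAlong (y : Fin d → ℝ) : ℝ :=
  ∑ k : Fin d, y (σ k) * (F (lovaszPrefix σ (k + 1)) - F (lovaszPrefix σ k))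

noncomputable def greedyVectorAlong : Fin d → ℝ :=
  fun m => F (lovaszPrefix σ ((σ.symm m : ℕ) + 1)) - F (lovaszPrefix σ (σ.symm m : ℕ))

lemma greedyVectorAlong_apply (k : Fin d) :
    greedyVectorAlong σ F (σ k) = F (lovaszPrefix σ (k + 1)) - F (lovaszPrefix σ k) := by
  simp [greedyVectorAlong]

lemma lovaszAlong_eq_sum_greedyVectorAlong_mul (y : Fin d → ℝ) :
    lovaszAlong σ F y = ∑ i, greedyVectorAlong σ F i * y i := by
  rw [← Equiv.sum_comp σ]
  exact Finset.sum_congr rfl fun k _ => by rw [greedyVectorAlong_apply, mul_comm]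

lemma greedyVectorAlong_sum (K : Fin d → ℝ) :
    greedyVectorAlong σ (fun A => ∑ i ∈ A, K i) = K := by
  funext m
  obtain ⟨k, rfl⟩ := σ.surjective m
  rw [greedyVectorAlong_apply, lovaszPrefix_succ,
    Finset.sum_insert (apply_notMem_lovaszPrefix σ k), add_sub_cancel_right]

lemma sum_mul_eq_lovaszAlong (K y : Fin d → ℝ) :
    ∑ i, K i * y i = lovaszAlong σ (fun A => ∑ i ∈ A, K i) y := by
  rw [lovaszAlong_eq_sum_greedyVectorAlong_mul, greedyVectorAlong_sum]

lemma lovaszAlong_le_lovaszAlong {G : Finset (Fin d) → ℝ}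
    (hle : ∀ A, G A - G ∅ ≤ F A - F ∅) (huniv : G Finset.univ - G ∅ = F Finset.univ - F ∅)
    {y : Fin d → ℝ} (hy : Antitone (y ∘ σ)) :
    lovaszAlong σ G y ≤ lovaszAlong σ F y := by
  set w : ℕ → ℝ := fun m => (F (lovaszPrefix σ m) - F ∅) - (G (lovaszPrefix σ m) - G ∅)
  have hw0 : w 0 = 0 := by simp [w, lovaszPrefix_zero]
  have hwd : w d = 0 := by simp [w, lovaszPrefix_self, huniv]
  have key := Fin.sum_mul_sub_nonneg_of_antitone hy (fun m => sub_nonneg.2 (hle _)) hw0 hwd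
  rw [← sub_nonneg, lovaszAlong, lovaszAlong, ← Finset.sum_sub_distrib]
  convert key using 2 with k
  simp only [Function.comp_apply]
  ring

lemma sum_greedyVectorAlong_univ :
    ∑ i, greedyVectorAlong σ F i = F Finset.univ - F ∅ := by
  rw [← Equiv.sum_comp σ]
  simp only [greedyVectorAlong_apply]
  rw [Fin.sum_sub_telescope (fun m => F (lovaszPrefix σ m)), lovaszPrefix_self,
    lovaszPrefix_zero]

lemma sum_greedyVectorAlong_le
    (hF : ∀ A B : Finset (Fin d), A ⊆ B → ∀ t ∉ B,
      F (insert t A) - F A ≥ F (insert t B) - F B)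
    (A : Finset (Fin d)) :
    ∑ i ∈ A, greedyVectorAlong σ F i ≤ F A - F ∅ := by
  have hstep : ∀ k : Fin d, (if σ k ∈ A then greedyVectorAlong σ F (σ k) else 0) ≤
      F (A ∩ lovaszPrefix σ (k + 1)) - F (A ∩ lovaszPrefix σ k) := by
    intro k
    rw [lovaszPrefix_succ]
    split_ifs with hk
    · rw [Finset.inter_insert_of_mem hk, greedyVectorAlong_apply, lovaszPrefix_succ]
      exact hF _ _ Finset.inter_subset_right _ (apply_notMem_lovaszPrefix σ k)
    · rw [Finset.inter_insert_of_notMem hk, sub_self]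
  calc ∑ i ∈ A, greedyVectorAlong σ F i
      = ∑ k : Fin d, if σ k ∈ A then greedyVectorAlong σ F (σ k) else 0 := by
        rw [Equiv.sum_comp σ (fun i => if i ∈ A then greedyVectorAlong σ F i else 0),
          Finset.sum_ite_mem, Finset.univ_inter]
    _ ≤ ∑ k : Fin d, (F (A ∩ lovaszPrefix σ (k + 1)) - F (A ∩ lovaszPrefix σ k)) :=
        Finset.sum_le_sum fun k _ => hstep k
    _ = F A - F ∅ := by
        rw [Fin.sum_sub_telescope (fun m => F (A ∩ lovaszPrefix σ m)), lovaszPrefix_self,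
          lovaszPrefix_zero, Finset.inter_univ, Finset.inter_empty]

end Along

lemma sum_mul_le_lovasz {d : ℕ} (F : Finset (Fin d) → ℝ) {K : Fin d → ℝ}
    (hK : ∀ A, ∑ i ∈ A, K i ≤ F A - F ∅) (huniv : ∑ i, K i = F Finset.univ - F ∅)
    (y : Fin d → ℝ) :
    ∑ i, K i * y i ≤ lovasz F y := by
  have hy : Antitone (y ∘ Tuple.sort (fun i => -y i)) := fun i j hij =>
    neg_le_neg_iff.1 (Tuple.monotone_sort (fun i => -y i) hij)
  rw [sum_mul_eq_lovaszAlong (Tuple.sort fun i => -y i)]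
  exact lovaszAlong_le_lovaszAlong _ F (by simpa using hK) (by simpa using huniv) hy

theorem stmt_16_general {d : ℕ} (F : Finset (Fin d) → ℝ)
    (hF : ∀ A B : Finset (Fin d), A ⊆ B → ∀ t ∉ B,
      F (insert t A) - F A ≥ F (insert t B) - F B)
    (s : Fin d → ℝ) :
    ∀ y : Fin d → ℝ,
      lovasz F y ≥ lovasz F s + ∑ i : Fin d, greedyVector F s i * (y i - s i) := by
  intro y
  set σ := Tuple.sort fun i => -s i
  have hs : lovasz F s = ∑ i, greedyVector F s i * s i :=
    lovaszAlong_eq_sum_greedyVectorAlong_mul σ F s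
  have hy : ∑ i, greedyVector F s i * y i ≤ lovasz F y :=
    sum_mul_le_lovasz F (sum_greedyVectorAlong_le σ F hF) (sum_greedyVectorAlong_univ σ F) y
  simp only [mul_sub, Finset.sum_sub_distrib]
  linarith

theorem stmt_16 {d : ℕ} (F : Finset (Fin d) → ℝ) (hF0 : F ∅ = 0)
    (hF : ∀ A B : Finset (Fin d), A ⊆ B → ∀ t ∉ B,
      F (insert t A) - F A ≥ F (insert t B) - F B)
    (s : Fin d → ℝ) :
    ∀ y : Fin d → ℝ,
      lovasz F y ≥ lovasz F s + ∑ i : Fin d, greedyVector F s i * (y i - s i) :=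
  stmt_16_general F hF s
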